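/- arXiv:hep-th/9607103 — 2 statements merged into one kernel-verified Lean document; each statement's English description precedes it below -/
import Mathlib

section
/- The full Z3-graded Grassmann algebra on N grade-1 generators θ_i and N grade-2 generators θ̄_i (with the relations aX = Xa for grade-0 a and A Ā = j Ā A for grade-1 A, grade-2 Ā) has complex dimension (3 + 4N + 9N² + 2N³)/3. -/
/-!
The monomials `1`, `θ_a`, `θ̄_a`, `θ_a θ_b`, `θ̄_a θ̄_b`, `θ_a θ̄_b`, together with one `θ_a θ_b θ_c`
and one `θ̄_a θ̄_b θ̄_c` for each orbit of size three of the rotation `(a, b, c) ↦ (b, c, a)`, form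
a basis.

They span: the relations give `θ̄_b θ_a = j² θ_a θ̄_b`, `θ_a θ_b θ_c = j θ_b θ_c θ_a` and
`θ̄_a θ̄_b θ̄_c = j θ̄_c θ̄_a θ̄_b`, so a cube is `j`-proportional to its rotations (and vanishes on
a constant triple), while all other products of three or four generators vanish: typically
`x = j² y` and `y = j² x` for a reordered product `y`, whence `x = j x = 0`.

They are independent: on the space with the monomials as basis, the multiplication dictated by
these rules is associative and satisfies the defining relations, so `G` acts on it by left
multiplication, and acting on the unit sends the monomials to the standard basis.

Finally `N³ = N + 3 · #orbits`, so `3 · dim = 3 (1 + 2N + 3N²) + 2 (N³ - N)`.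
-/

noncomputable section

/-- `j = e^{2πi/3}`, a primitive cube root of unity. -/
def jj : ℂ := Complex.exp (2 * Real.pi * Complex.I / 3)

namespace Z3

/-- Generators: `Sum.inl i` is the grade-1 generator `θ_i`,
`Sum.inr i` is the grade-2 generator `θ̄_i`. -/
abbrev Gen (N : ℕ) := Fin N ⊕ Fin N

/-- Grade of a generator. -/
def genGrade {N : ℕ} : Gen N → ZMod 3
  | Sum.inl _ => 1
  | Sum.inr _ => 2

/-- Grade of a word in the generators (sum of the grades mod 3). -/
def wGrade {N : ℕ} (w : List (Gen N)) : ZMod 3 := (w.map genGrade).sum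

/-- The product in the free algebra of the letters of a word. -/
def wProd {N : ℕ} (w : List (Gen N)) : FreeAlgebra ℂ (Gen N) :=
  (w.map (FreeAlgebra.ι ℂ)).prod

/-- Defining relations of the `ℤ₃`-graded Grassmann algebra: homogeneous
grade-0 elements are central, and `A Ā = j Ā A` for `A` of grade 1 and `Ā` of
grade 2. -/
inductive Rel (N : ℕ) : FreeAlgebra ℂ (Gen N) → FreeAlgebra ℂ (Gen N) → Prop
  | central (w₁ w₂ : List (Gen N)) (h : wGrade w₁ = 0) :
      Rel N (wProd w₁ * wProd w₂) (wProd w₂ * wProd w₁)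
  | comm12 (w₁ w₂ : List (Gen N)) (h₁ : wGrade w₁ = 1) (h₂ : wGrade w₂ = 2) :
      Rel N (wProd w₁ * wProd w₂) (jj • (wProd w₂ * wProd w₁))

/-- The `ℤ₃`-graded Grassmann algebra on `N` grade-1 generators `θ_i` and `N`
grade-2 generators `θ̄_i`. -/
abbrev G (N : ℕ) := RingQuot (Rel N)

/-- The canonical quotient map. -/
def mk (N : ℕ) : FreeAlgebra ℂ (Gen N) →ₐ[ℂ] G N := RingQuot.mkAlgHom ℂ (Rel N)

/-- The homogeneous component of grade `g`: the span of (classes of) words of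
grade `g`. -/
def 𝒢 {N : ℕ} (g : ZMod 3) : Submodule ℂ (G N) :=
  Submodule.span ℂ {x | ∃ w : List (Gen N), wGrade w = g ∧ x = mk N (wProd w)}

/-- The "body" map on the free algebra, sending every generator to `0`. -/
def bodyF (N : ℕ) : FreeAlgebra ℂ (Gen N) →ₐ[ℂ] ℂ :=
  FreeAlgebra.lift ℂ (fun _ : Gen N => (0 : ℂ))

lemma bodyF_wProd_ne_nil {N : ℕ} (w : List (Gen N)) (hw : w ≠ []) :
    bodyF N (wProd w) = 0 := by
  cases w with
  | nil => exact absurd rfl hw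
  | cons a t =>
      simp only [wProd, List.map_cons, List.prod_cons, map_mul, bodyF,
        FreeAlgebra.lift_ι_apply, zero_mul]

lemma wGrade_ne_nil {N : ℕ} {w : List (Gen N)} {g : ZMod 3} (h : wGrade w = g)
    (hg : g ≠ 0) : w ≠ [] := by
  intro e; subst e; simp [wGrade] at h; exact hg h.symm

/-- The body (augmentation) map of the Grassmann algebra: coefficient of the
unit `I`. -/
def bodyA (N : ℕ) : G N →ₐ[ℂ] ℂ :=
  RingQuot.liftAlgHom ℂ ⟨bodyF N, by
    intro x y h
    cases h with
    | central w₁ w₂ h => simp only [map_mul]; ring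
    | comm12 w₁ w₂ h₁ h₂ =>
        have h1 : bodyF N (wProd w₁) = 0 :=
          bodyF_wProd_ne_nil w₁ (wGrade_ne_nil h₁ (by decide))
        simp [map_mul, map_smul, h1]⟩

end Z3

lemma isPrimitiveRoot_jj : IsPrimitiveRoot jj 3 := by
  simpa [jj] using Complex.isPrimitiveRoot_exp 3 (by norm_num)

lemma jj_pow_three : jj ^ 3 = 1 := isPrimitiveRoot_jj.pow_eq_one

lemma jj_ne_one : jj ≠ 1 := isPrimitiveRoot_jj.ne_one (by norm_num)

lemma jj_sq_ne_one : jj ^ 2 ≠ 1 :=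
  isPrimitiveRoot_jj.pow_ne_one_of_pos_of_lt (by norm_num) (by norm_num)

lemma jj_sq_mul_jj_sq_ne_one : jj ^ 2 * jj ^ 2 ≠ 1 := by
  rw [← pow_add, show 2 + 2 = 3 + 1 from rfl, pow_succ, jj_pow_three, one_mul]
  exact jj_ne_one

lemma eq_zero_of_smul_eq_self {K M : Type*} [Field K] [AddCommGroup M] [Module K M] {c : K}
    (hc : c ≠ 1) {x : M} (h : c • x = x) : x = 0 := by
  by_contra hx
  exact hc (smul_left_injective K hx (by simpa using h))

lemma eq_zero_of_eq_smul_of_eq_smul {K M : Type*} [Field K] [AddCommGroup M] [Module K M]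
    {c : K} (hc : c * c ≠ 1) {x y : M} (hxy : x = c • y) (hyx : y = c • x) : x = 0 :=
  eq_zero_of_smul_eq_self hc (by rw [mul_smul, ← hyx, ← hxy])

lemma Submodule.apply_mem_of_mem_span₂ {R M N P : Type*} [CommSemiring R] [AddCommMonoid M]
    [AddCommMonoid N] [AddCommMonoid P] [Module R M] [Module R N] [Module R P]
    (f : M →ₗ[R] N →ₗ[R] P) {s : Set M} {t : Set N} {p : Submodule R P}
    (h : ∀ x ∈ s, ∀ y ∈ t, f x y ∈ p) {x : M} {y : N} (hx : x ∈ span R s) (hy : y ∈ span R t) :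
    f x y ∈ p := by
  have := apply_mem_map₂ f hx hy
  rw [map₂_span_span] at this
  exact span_le.2 (by rintro _ ⟨x, hx, y, hy, rfl⟩; exact h x hx y hy) this

section CyclicMin

variable {α : Type*} [LinearOrder α] {r : α → α}

/-- For `r` with `r ∘ r ∘ r = id`, this picks one element in each orbit of size three. -/
def IsCyclicMin (r : α → α) (t : α) : Prop := t < r t ∧ t < r (r t)

instance : DecidablePred (IsCyclicMin r) := fun _ => inferInstanceAs (Decidable (_ ∧ _))

/-- If `x t = ω • x (r t)` for all `t`, then `x t = orbitCoeff r ω c t • x c` on the orbit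
of `c`. -/
def orbitCoeff {K : Type*} [CommRing K] (r : α → α) (ω : K) (c t : α) : K :=
  if t = c then 1 else if t = r c then ω ^ 2 else if t = r (r c) then ω else 0

def orbitSum {K M : Type*} [CommRing K] [AddCommGroup M] [Module K M] [Fintype α] (r : α → α)
    (ω : K) (v : {c // IsCyclicMin r c} → M) (t : α) : M :=
  ∑ c, orbitCoeff r ω c.1 t • v c

variable (hr : ∀ t, r (r (r t)) = t)
include hr

lemma IsCyclicMin.not_rot {c : α} (hc : IsCyclicMin r c) : ¬ IsCyclicMin r (r c) := by
  have := hr c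
  unfold IsCyclicMin at *
  order

lemma IsCyclicMin.not_rot_rot {c : α} (hc : IsCyclicMin r c) : ¬ IsCyclicMin r (r (r c)) := by
  have := hr c
  unfold IsCyclicMin at *
  order

lemma isCyclicMin_or_of_ne {t : α} (ht : r t ≠ t) :
    IsCyclicMin r t ∨ IsCyclicMin r (r t) ∨ IsCyclicMin r (r (r t)) := by
  have h1 : r (r t) ≠ t := fun h => ht (by simpa [hr, eq_comm] using congrArg r h)
  have h2 : r (r t) ≠ r t := fun h => h1 (by simpa [hr, eq_comm] using congrArg r h)
  unfold IsCyclicMin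
  rw [hr]
  rcases lt_or_gt_of_ne ht with h | h <;> rcases lt_or_gt_of_ne h1 with h' | h' <;>
    rcases lt_or_gt_of_ne h2 with h'' | h''
  all_goals first
    | (refine Or.inl ⟨?_, ?_⟩ <;> order)
    | (refine Or.inr (Or.inl ⟨?_, ?_⟩) <;> order)
    | (refine Or.inr (Or.inr ⟨?_, ?_⟩) <;> order)

lemma ite_fixed_add_ite_isCyclicMin_eq_one (t : α) :
    ((if r t = t then 1 else 0) + (if IsCyclicMin r t then 1 else 0) +
      (if IsCyclicMin r (r t) then 1 else 0) + (if IsCyclicMin r (r (r t)) then 1 else 0) : ℕ)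
      = 1 := by
  by_cases ht : r t = t
  · simp [IsCyclicMin, ht]
  have h0 := fun h : IsCyclicMin r t => h.not_rot hr
  have h1 := fun h : IsCyclicMin r (r t) => h.not_rot hr
  have h2 := fun h : IsCyclicMin r t => h.not_rot_rot hr
  rcases isCyclicMin_or_of_ne hr ht with h | h | h <;> simp_all

lemma card_eq_card_fixed_add_three_mul_card_isCyclicMin [Fintype α] :
    Fintype.card α = Fintype.card {t // r t = t} + 3 * Fintype.card {t // IsCyclicMin r t} := by
  let e : α ≃ α := ⟨r, fun t => r (r t), hr, hr⟩
  have hsum (p : α → Prop) [DecidablePred p] :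
      ∑ t, (if p (r t) then 1 else 0 : ℕ) = ∑ t, if p t then 1 else 0 :=
    e.sum_comp fun t => if p t then 1 else 0
  simp only [Fintype.card_subtype, Finset.card_filter]
  calc Fintype.card α
      = ∑ t, ((if r t = t then 1 else 0) + (if IsCyclicMin r t then 1 else 0) +
          (if IsCyclicMin r (r t) then 1 else 0) + (if IsCyclicMin r (r (r t)) then 1 else 0)) := by
        simp [ite_fixed_add_ite_isCyclicMin_eq_one hr]
    _ = _ := by
      rw [Finset.sum_add_distrib, Finset.sum_add_distrib, Finset.sum_add_distrib,
        hsum fun t => IsCyclicMin r (r t), hsum]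
      ring

lemma mem_span_image_isCyclicMin {K M : Type*} [Field K] [AddCommGroup M] [Module K M] {ω : K}
    (hω : ω ≠ 1) {x : α → M} (hx : ∀ t, x t = ω • x (r t)) (t : α) :
    x t ∈ Submodule.span K (x '' {c | IsCyclicMin r c}) := by
  by_cases ht : r t = t
  · have h := hx t
    rw [ht] at h
    rw [eq_zero_of_smul_eq_self hω h.symm]
    exact zero_mem _
  have hmem (c : α) (hc : IsCyclicMin r c) : x c ∈ Submodule.span K (x '' {c | IsCyclicMin r c}) :=
    Submodule.subset_span ⟨c, hc, rfl⟩
  rcases isCyclicMin_or_of_ne hr ht with h | h | h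
  · exact hmem t h
  · rw [hx]
    exact Submodule.smul_mem _ _ (hmem _ h)
  · rw [hx, hx (r t)]
    exact Submodule.smul_mem _ _ (Submodule.smul_mem _ _ (hmem _ h))

section OrbitSum

variable {K M : Type*} [CommRing K] [AddCommGroup M] [Module K M]

lemma orbitCoeff_eq_mul_rot {ω : K} (hω : ω ^ 3 = 1) {c : α} (hc : IsCyclicMin r c) (t : α) :
    orbitCoeff r ω c t = ω * orbitCoeff r ω c (r t) := by
  have hinj (x y : α) (h : r x = r y) : x = y := by rw [← hr x, ← hr y, h]
  have h1 : r c ≠ c := hc.1.ne'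
  have h2 : r (r c) ≠ c := hc.2.ne'
  have h3 : r (r c) ≠ r c := fun h => h1 (hinj _ _ h)
  unfold orbitCoeff
  split_ifs <;> subst_vars <;> first | ring1 | linear_combination -hω | grind

lemma orbitCoeff_of_isCyclicMin {ω : K} {c t : α} (hc : IsCyclicMin r c) (ht : IsCyclicMin r t) :
    orbitCoeff r ω c t = if t = c then 1 else 0 := by
  unfold orbitCoeff
  split_ifs <;> subst_vars <;>
    first | rfl | exact absurd ht (hc.not_rot hr) | exact absurd ht (hc.not_rot_rot hr)

variable [Fintype α]

lemma orbitSum_eq_smul_rot {ω : K} (hω : ω ^ 3 = 1) (v : {c // IsCyclicMin r c} → M) (t : α) :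
    orbitSum r ω v t = ω • orbitSum r ω v (r t) := by
  simp only [orbitSum, Finset.smul_sum, smul_smul, ← orbitCoeff_eq_mul_rot hr hω (Subtype.prop _)]

lemma orbitSum_val (ω : K) (v : {c // IsCyclicMin r c} → M) (c : {c // IsCyclicMin r c}) :
    orbitSum r ω v c.1 = v c := by
  rw [orbitSum, Finset.sum_eq_single c]
  · simp [orbitCoeff_of_isCyclicMin hr c.2 c.2]
  · intro d _ hdc
    rw [orbitCoeff_of_isCyclicMin hr d.2 c.2, if_neg fun h => hdc (Subtype.ext h).symm, zero_smul]
  · simp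

end OrbitSum

end CyclicMin

namespace Z3

variable {N : ℕ}

def gen (g : Gen N) : G N := mk N (FreeAlgebra.ι ℂ g)

abbrev θ (a : Fin N) : G N := gen (.inl a)

abbrev θbar (a : Fin N) : G N := gen (.inr a)

lemma mk_wProd (w : List (Gen N)) : mk N (wProd w) = (w.map gen).prod := by
  simp only [wProd, map_list_prod, List.map_map]
  rfl

lemma prod_gen_comm_of_wGrade_eq_zero {w₁ : List (Gen N)} (h : wGrade w₁ = 0)
    (w₂ : List (Gen N)) :
    (w₁.map gen).prod * (w₂.map gen).prod = (w₂.map gen).prod * (w₁.map gen).prod := by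
  simp only [← mk_wProd, ← map_mul]
  exact RingQuot.mkAlgHom_rel ℂ (Rel.central w₁ w₂ h)

lemma prod_gen_comm_of_wGrade_eq_one_two {w₁ w₂ : List (Gen N)} (h₁ : wGrade w₁ = 1)
    (h₂ : wGrade w₂ = 2) :
    (w₁.map gen).prod * (w₂.map gen).prod = jj • ((w₂.map gen).prod * (w₁.map gen).prod) := by
  simp only [← mk_wProd, ← map_mul, ← map_smul]
  exact RingQuot.mkAlgHom_rel ℂ (Rel.comm12 w₁ w₂ h₁ h₂)

section Relations

variable (a b c d : Fin N)

lemma θbar_mul_θ : θbar b * θ a = jj ^ 2 • (θ a * θbar b) := by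
  have h := prod_gen_comm_of_wGrade_eq_one_two (w₁ := [.inl a]) (w₂ := [.inr b]) rfl rfl
  simp only [List.map_cons, List.map_nil, List.prod_singleton] at h
  rw [h, smul_smul, ← pow_succ, jj_pow_three, one_smul]

lemma θ_mul_θ_mul_θ : θ a * θ b * θ c = jj • (θ b * θ c * θ a) := by
  have h := prod_gen_comm_of_wGrade_eq_one_two (w₁ := [.inl a]) (w₂ := [.inl b, .inl c]) rfl rfl
  simpa [mul_assoc] using h

lemma θbar_mul_θbar_mul_θbar : θbar a * θbar b * θbar c = jj • (θbar c * θbar a * θbar b) := by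
  have h := prod_gen_comm_of_wGrade_eq_one_two (w₁ := [.inr a, .inr b]) (w₂ := [.inr c]) rfl rfl
  simpa [mul_assoc] using h

lemma θ_mul_θbar_mul_gen (g : Gen N) : θ a * θbar b * gen g = gen g * (θ a * θbar b) := by
  have h := prod_gen_comm_of_wGrade_eq_zero (w₁ := [.inl a, .inr b]) rfl [g]
  simpa [mul_assoc] using h

lemma θ_mul_θ_mul_θbar : θ a * θ b * θbar c = 0 := by
  have key (a b : Fin N) : θ a * θ b * θbar c = jj ^ 2 • (θ b * θ a * θbar c) := by
    rw [mul_assoc, ← θ_mul_θbar_mul_gen, mul_assoc, θbar_mul_θ, mul_smul_comm, ← mul_assoc]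
  exact eq_zero_of_eq_smul_of_eq_smul jj_sq_mul_jj_sq_ne_one (key a b) (key b a)

lemma θ_mul_θbar_mul_θbar : θ a * θbar b * θbar c = 0 := by
  have key (b c : Fin N) : θ a * θbar b * θbar c = jj ^ 2 • (θ a * θbar c * θbar b) := by
    rw [θ_mul_θbar_mul_gen, ← mul_assoc, θbar_mul_θ, smul_mul_assoc]
  exact eq_zero_of_eq_smul_of_eq_smul jj_sq_mul_jj_sq_ne_one (key b c) (key c b)

lemma θbar_mul_θ_mul_θ : θbar a * θ b * θ c = 0 := by
  rw [θbar_mul_θ, smul_mul_assoc, mul_assoc, θbar_mul_θ, mul_smul_comm, ← mul_assoc,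
    θ_mul_θ_mul_θbar, smul_zero, smul_zero]

lemma θbar_mul_θ_mul_θbar : θbar a * θ b * θbar c = 0 := by
  rw [θbar_mul_θ, smul_mul_assoc, θ_mul_θbar_mul_θbar, smul_zero]

lemma θ_mul_θ_mul_θ_mul_θ : θ a * θ b * θ c * θ d = 0 := by
  have key (a b c d : Fin N) : θ a * θ b * θ c * θ d = jj ^ 2 • (θ b * θ a * θ d * θ c) := by
    calc θ a * θ b * θ c * θ d = jj • (θ b * (θ c * θ a * θ d)) := by
          rw [θ_mul_θ_mul_θ a b c]; simp only [smul_mul_assoc, mul_assoc]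
      _ = jj ^ 2 • (θ b * θ a * θ d * θ c) := by
          rw [θ_mul_θ_mul_θ c a d]; simp only [mul_smul_comm, smul_smul, mul_assoc, sq]
  exact eq_zero_of_eq_smul_of_eq_smul jj_sq_mul_jj_sq_ne_one (key a b c d) (key b a d c)

lemma θbar_mul_θbar_mul_θbar_mul_θbar : θbar a * θbar b * θbar c * θbar d = 0 := by
  have key (a b c d : Fin N) :
      θbar a * θbar b * θbar c * θbar d = jj ^ 2 • (θbar c * θbar d * θbar a * θbar b) := by
    calc θbar a * θbar b * θbar c * θbar d = jj • (θbar c * (θbar a * θbar b * θbar d)) := by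
          rw [θbar_mul_θbar_mul_θbar a b c]; simp only [smul_mul_assoc, mul_assoc]
      _ = jj ^ 2 • (θbar c * θbar d * θbar a * θbar b) := by
          rw [θbar_mul_θbar_mul_θbar a b d]; simp only [mul_smul_comm, smul_smul, mul_assoc, sq]
  exact eq_zero_of_eq_smul_of_eq_smul jj_sq_mul_jj_sq_ne_one (key a b c d) (key c d a b)

end Relations

/-- The lexicographic order only serves to choose a representative of each rotation orbit. -/
abbrev Triple (N : ℕ) := Fin N ×ₗ Fin N ×ₗ Fin N

def rot (t : Triple N) : Triple N := toLex (t.2.1, toLex (t.2.2, t.1))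

lemma rot_rot_rot (t : Triple N) : rot (rot (rot t)) = t := rfl

abbrev CanonTriple (N : ℕ) := {t : Triple N // IsCyclicMin rot t}

lemma pow_three_eq_add_three_mul_card_canonTriple :
    N ^ 3 = N + 3 * Fintype.card (CanonTriple N) := by
  have hfixed : {t : Triple N // rot t = t} ≃ Fin N :=
    { toFun t := t.1.1
      invFun a := ⟨toLex (a, toLex (a, a)), rfl⟩
      left_inv := by
        rintro ⟨⟨a, b, c⟩, h⟩
        simp only [rot, toLex] at h
        obtain ⟨rfl, rfl, -⟩ := h
        rfl
      right_inv _ := rfl }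
  have := card_eq_card_fixed_add_three_mul_card_isCyclicMin (rot_rot_rot (N := N))
  simp only [Fintype.card_congr hfixed, Fintype.card_lex, Fintype.card_prod, Fintype.card_fin]
    at this
  rw [← this]
  ring

def θCube (t : Triple N) : G N := θ t.1 * θ t.2.1 * θ t.2.2

def θbarCube (t : Triple N) : G N := θbar t.1 * θbar t.2.1 * θbar t.2.2

lemma θCube_eq_smul_rot (t : Triple N) : θCube t = jj • θCube (rot t) :=
  θ_mul_θ_mul_θ _ _ _

lemma θbarCube_eq_smul_rot (t : Triple N) : θbarCube t = jj ^ 2 • θbarCube (rot t) := by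
  change _ = _ • (θbar t.2.1 * θbar t.2.2 * θbar t.1)
  rw [θbar_mul_θbar_mul_θbar t.2.1, smul_smul, ← pow_succ, jj_pow_three, one_smul]
  rfl

inductive MonomialIndex (N : ℕ)
  | one
  | θ (a : Fin N)
  | θbar (a : Fin N)
  | θθ (a b : Fin N)
  | θbarθbar (a b : Fin N)
  | θθbar (a b : Fin N)
  | θCube (c : CanonTriple N)
  | θbarCube (c : CanonTriple N)
  deriving DecidableEq

def MonomialIndex.equivSum : MonomialIndex N ≃
    Unit ⊕ Fin N ⊕ Fin N ⊕ (Fin N × Fin N) ⊕ (Fin N × Fin N) ⊕ (Fin N × Fin N) ⊕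
      CanonTriple N ⊕ CanonTriple N where
  toFun
    | .one => .inl ()
    | .θ a => .inr (.inl a)
    | .θbar a => .inr (.inr (.inl a))
    | .θθ a b => .inr (.inr (.inr (.inl (a, b))))
    | .θbarθbar a b => .inr (.inr (.inr (.inr (.inl (a, b)))))
    | .θθbar a b => .inr (.inr (.inr (.inr (.inr (.inl (a, b))))))
    | .θCube c => .inr (.inr (.inr (.inr (.inr (.inr (.inl c))))))
    | .θbarCube c => .inr (.inr (.inr (.inr (.inr (.inr (.inr c))))))
  invFun
    | .inl () => .one
    | .inr (.inl a) => .θ a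
    | .inr (.inr (.inl a)) => .θbar a
    | .inr (.inr (.inr (.inl (a, b)))) => .θθ a b
    | .inr (.inr (.inr (.inr (.inl (a, b))))) => .θbarθbar a b
    | .inr (.inr (.inr (.inr (.inr (.inl (a, b)))))) => .θθbar a b
    | .inr (.inr (.inr (.inr (.inr (.inr (.inl c)))))) => .θCube c
    | .inr (.inr (.inr (.inr (.inr (.inr (.inr c)))))) => .θbarCube c
  left_inv i := by cases i <;> rfl
  right_inv x := by rcases x with _ | _ | _ | ⟨_, _⟩ | ⟨_, _⟩ | ⟨_, _⟩ | _ | _ <;> rfl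

instance : Fintype (MonomialIndex N) := Fintype.ofEquiv _ MonomialIndex.equivSum.symm

lemma card_monomialIndex : Fintype.card (MonomialIndex N) =
    1 + 2 * N + 3 * N ^ 2 + 2 * Fintype.card (CanonTriple N) := by
  simp only [Fintype.card_congr MonomialIndex.equivSum, Fintype.card_sum, Fintype.card_unit,
    Fintype.card_prod, Fintype.card_fin]
  ring

def monomial : MonomialIndex N → G N
  | .one => 1
  | .θ a => θ a
  | .θbar a => θbar a
  | .θθ a b => θ a * θ b
  | .θbarθbar a b => θbar a * θbar b
  | .θθbar a b => θ a * θbar b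
  | .θCube c => θCube c.1
  | .θbarCube c => θbarCube c.1

lemma monomial_mem_span (i : MonomialIndex N) :
    monomial i ∈ Submodule.span ℂ (Set.range monomial) :=
  Submodule.subset_span ⟨i, rfl⟩

lemma θCube_mem_span (t : Triple N) : θCube t ∈ Submodule.span ℂ (Set.range monomial) := by
  refine Submodule.span_mono ?_
    (mem_span_image_isCyclicMin rot_rot_rot jj_ne_one θCube_eq_smul_rot t)
  rintro _ ⟨c, hc, rfl⟩
  exact ⟨.θCube ⟨c, hc⟩, rfl⟩

lemma θbarCube_mem_span (t : Triple N) : θbarCube t ∈ Submodule.span ℂ (Set.range monomial) := by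
  refine Submodule.span_mono ?_
    (mem_span_image_isCyclicMin rot_rot_rot jj_sq_ne_one θbarCube_eq_smul_rot t)
  rintro _ ⟨c, hc, rfl⟩
  exact ⟨.θbarCube ⟨c, hc⟩, rfl⟩

lemma θ_mul_monomial_mem_span (a : Fin N) (i : MonomialIndex N) :
    θ a * monomial i ∈ Submodule.span ℂ (Set.range monomial) := by
  cases i with
  | one => rw [monomial, mul_one]; exact monomial_mem_span (.θ a)
  | θ b => exact monomial_mem_span (.θθ a b)
  | θbar b => exact monomial_mem_span (.θθbar a b)
  | θθ b c => rw [monomial, ← mul_assoc]; exact θCube_mem_span (toLex (a, toLex (b, c)))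
  | θbarθbar b c => simp only [monomial, ← mul_assoc, θ_mul_θbar_mul_θbar, zero_mem]
  | θθbar b c => simp only [monomial, ← mul_assoc, θ_mul_θ_mul_θbar, zero_mem]
  | θCube c => simp only [monomial, θCube, ← mul_assoc, θ_mul_θ_mul_θ_mul_θ, zero_mem]
  | θbarCube c =>
    simp only [monomial, θbarCube, ← mul_assoc, θ_mul_θbar_mul_θbar, zero_mul, zero_mem]

lemma θbar_mul_monomial_mem_span (a : Fin N) (i : MonomialIndex N) :
    θbar a * monomial i ∈ Submodule.span ℂ (Set.range monomial) := by
  cases i with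
  | one => rw [monomial, mul_one]; exact monomial_mem_span (.θbar a)
  | θ b =>
    rw [monomial, θbar_mul_θ]
    exact Submodule.smul_mem _ _ (monomial_mem_span (.θθbar b a))
  | θbar b => exact monomial_mem_span (.θbarθbar a b)
  | θθ b c => simp only [monomial, ← mul_assoc, θbar_mul_θ_mul_θ, zero_mem]
  | θbarθbar b c =>
    rw [monomial, ← mul_assoc]
    exact θbarCube_mem_span (toLex (a, toLex (b, c)))
  | θθbar b c => simp only [monomial, ← mul_assoc, θbar_mul_θ_mul_θbar, zero_mem]
  | θCube c => simp only [monomial, θCube, ← mul_assoc, θbar_mul_θ_mul_θ, zero_mul, zero_mem]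
  | θbarCube c =>
    simp only [monomial, θbarCube, ← mul_assoc, θbar_mul_θbar_mul_θbar_mul_θbar, zero_mem]

lemma span_monomial_eq_top : Submodule.span ℂ (Set.range (monomial (N := N))) = ⊤ := by
  set S := Submodule.span ℂ (Set.range (monomial (N := N)))
  have hgen (g : Gen N) : S ≤ S.comap (LinearMap.mulLeft ℂ (gen g)) := by
    refine Submodule.span_le.2 ?_
    rintro _ ⟨i, rfl⟩
    rcases g with a | a
    exacts [θ_mul_monomial_mem_span a i, θbar_mul_monomial_mem_span a i]
  have hmk (y : FreeAlgebra ℂ (Gen N)) : ∀ x ∈ S, mk N y * x ∈ S := by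
    induction y using FreeAlgebra.induction with
    | grade0 r =>
      intro x hx
      rw [AlgHom.commutes, ← Algebra.smul_def]
      exact S.smul_mem r hx
    | grade1 g => exact hgen g
    | mul a b ha hb =>
      intro x hx
      rw [map_mul, mul_assoc]
      exact ha _ (hb x hx)
    | add a b ha hb =>
      intro x hx
      rw [map_add, add_mul]
      exact add_mem (ha x hx) (hb x hx)
  refine eq_top_iff.2 fun x _ => ?_
  obtain ⟨y, rfl⟩ := RingQuot.mkAlgHom_surjective ℂ (Rel N) x
  have := hmk y _ (monomial_mem_span .one)
  rwa [monomial, mul_one] at this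

abbrev Model (N : ℕ) := MonomialIndex N → ℂ

def e (i : MonomialIndex N) : Model N := Pi.basisFun ℂ (MonomialIndex N) i

def θCubeVec (t : Triple N) : Model N := orbitSum rot jj (fun c => e (.θCube c)) t

def θbarCubeVec (t : Triple N) : Model N := orbitSum rot (jj ^ 2) (fun c => e (.θbarCube c)) t

/-- The products of monomials in `G`, reduced by the relations `θbar_mul_θ`, `θ_mul_θ_mul_θ`,
`θbar_mul_θbar_mul_θbar` and the vanishing lemmas above. -/
def mulTable : MonomialIndex N → MonomialIndex N → Model N
  | .one, k => e k
  | i, .one => e i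
  | .θ a, .θ b => e (.θθ a b)
  | .θ a, .θbar b => e (.θθbar a b)
  | .θbar a, .θ b => jj ^ 2 • e (.θθbar b a)
  | .θbar a, .θbar b => e (.θbarθbar a b)
  | .θ a, .θθ b c => θCubeVec (toLex (a, toLex (b, c)))
  | .θθ a b, .θ c => θCubeVec (toLex (a, toLex (b, c)))
  | .θbar a, .θbarθbar b c => θbarCubeVec (toLex (a, toLex (b, c)))
  | .θbarθbar a b, .θbar c => θbarCubeVec (toLex (a, toLex (b, c)))
  | _, _ => 0

def modelMul : Model N →ₗ[ℂ] Model N →ₗ[ℂ] Model N :=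
  (Pi.basisFun ℂ (MonomialIndex N)).constr ℂ fun i =>
    (Pi.basisFun ℂ (MonomialIndex N)).constr ℂ (mulTable i)

lemma modelMul_e_e (i k : MonomialIndex N) : modelMul (e i) (e k) = mulTable i k := by
  simp only [modelMul, e, Module.Basis.constr_basis]

lemma modelMul_e_one_left (x : Model N) : modelMul (e .one) x = x := by
  have : modelMul (e (.one : MonomialIndex N)) = LinearMap.id :=
    (Pi.basisFun ℂ (MonomialIndex N)).ext fun k => modelMul_e_e .one k
  rw [this, LinearMap.id_apply]

lemma modelMul_e_one_right (x : Model N) : modelMul x (e .one) = x := by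
  have : modelMul.flip (e (.one : MonomialIndex N)) = LinearMap.id :=
    (Pi.basisFun ℂ (MonomialIndex N)).ext fun i => by
      rw [LinearMap.flip_apply, ← e, modelMul_e_e]
      cases i <;> rfl
  rw [← LinearMap.flip_apply, this, LinearMap.id_apply]

set_option maxHeartbeats 400000 in
lemma modelMul_assoc_e (i k l : MonomialIndex N) :
    modelMul (modelMul (e i) (e k)) (e l) = modelMul (e i) (modelMul (e k) (e l)) := by
  cases i <;> cases k <;> cases l <;>
    simp [modelMul_e_e, mulTable, θCubeVec, θbarCubeVec, orbitSum, modelMul_e_one_left,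
      modelMul_e_one_right]

lemma modelMul_assoc (x y z : Model N) :
    modelMul (modelMul x y) z = modelMul x (modelMul y z) := by
  have : modelMul.compr₂ modelMul =
      (LinearMap.llcomp ℂ _ _ _ ∘ₗ modelMul).compl₂ (modelMul (N := N)) :=
    LinearMap.ext_basis (Pi.basisFun ℂ _) (Pi.basisFun ℂ _) fun i k =>
      (Pi.basisFun ℂ _).ext fun l => by
        simp only [LinearMap.compr₂_apply, LinearMap.compl₂_apply, LinearMap.comp_apply,
          LinearMap.llcomp_apply]
        exact modelMul_assoc_e i k l
  exact LinearMap.congr_fun (LinearMap.congr_fun₂ this x y) z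

lemma θCubeVec_eq_smul_rot (t : Triple N) : θCubeVec t = jj • θCubeVec (rot t) :=
  orbitSum_eq_smul_rot rot_rot_rot jj_pow_three _ t

lemma θbarCubeVec_eq_smul_rot (t : Triple N) : θbarCubeVec t = jj ^ 2 • θbarCubeVec (rot t) :=
  orbitSum_eq_smul_rot rot_rot_rot (by rw [← pow_mul, mul_comm, pow_mul, jj_pow_three, one_pow])
    _ t

def grade : MonomialIndex N → ZMod 3
  | .one => 0
  | .θ _ => 1
  | .θbar _ => 2
  | .θθ _ _ => 2
  | .θbarθbar _ _ => 1
  | .θθbar _ _ => 0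
  | .θCube _ => 0
  | .θbarCube _ => 0

def homogeneous (g : ZMod 3) : Submodule ℂ (Model N) :=
  Submodule.span ℂ (e '' {i | grade i = g})

lemma e_mem_homogeneous {i : MonomialIndex N} {g : ZMod 3} (h : grade i = g) :
    e i ∈ homogeneous g :=
  Submodule.subset_span ⟨i, h, rfl⟩

lemma θCubeVec_mem_homogeneous (t : Triple N) : θCubeVec t ∈ homogeneous 0 :=
  Submodule.sum_mem _ fun _ _ => Submodule.smul_mem _ _ (e_mem_homogeneous rfl)

lemma θbarCubeVec_mem_homogeneous (t : Triple N) : θbarCubeVec t ∈ homogeneous 0 :=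
  Submodule.sum_mem _ fun _ _ => Submodule.smul_mem _ _ (e_mem_homogeneous rfl)

lemma mulTable_mem_homogeneous (i k : MonomialIndex N) :
    mulTable i k ∈ homogeneous (grade i + grade k) := by
  cases i <;> cases k <;> simp only [mulTable, Submodule.zero_mem]
  case θ.θθ | θθ.θ => exact θCubeVec_mem_homogeneous _
  case θbar.θbarθbar | θbarθbar.θbar => exact θbarCubeVec_mem_homogeneous _
  case θbar.θ => exact Submodule.smul_mem _ _ (e_mem_homogeneous (by simp only [grade]; decide))
  all_goals exact e_mem_homogeneous (by simp only [grade]; decide)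

lemma modelMul_mem_homogeneous {g h : ZMod 3} {x y : Model N} (hx : x ∈ homogeneous g)
    (hy : y ∈ homogeneous h) : modelMul x y ∈ homogeneous (g + h) := by
  refine Submodule.apply_mem_of_mem_span₂ modelMul ?_ hx hy
  rintro _ ⟨i, rfl, rfl⟩ _ ⟨k, rfl, rfl⟩
  rw [modelMul_e_e]
  exact mulTable_mem_homogeneous i k

lemma modelMul_comm_of_mem_homogeneous_zero {x : Model N} (hx : x ∈ homogeneous 0)
    (y : Model N) : modelMul x y = modelMul y x := by
  have := Submodule.apply_mem_of_mem_span₂ (modelMul - modelMul.flip) (p := ⊥) ?_ hx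
    ((Pi.basisFun ℂ (MonomialIndex N)).mem_span y)
  · simpa [sub_eq_zero] using this
  rintro _ ⟨i, (hi : grade i = 0), rfl⟩ _ ⟨k, rfl⟩
  change modelMul (e i) (e k) - modelMul.flip (e i) (e k) ∈ ⊥
  rw [LinearMap.flip_apply, modelMul_e_e, modelMul_e_e, Submodule.mem_bot, sub_eq_zero]
  cases i <;> cases k <;> first | rfl | exact absurd hi (by simp only [grade]; decide)

lemma modelMul_eq_jj_smul_of_mem_homogeneous {x y : Model N} (hx : x ∈ homogeneous 1)
    (hy : y ∈ homogeneous 2) : modelMul x y = jj • modelMul y x := by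
  have := Submodule.apply_mem_of_mem_span₂ (modelMul - jj • modelMul.flip) (p := ⊥) ?_ hx hy
  · simpa [sub_eq_zero] using this
  rintro _ ⟨i, (hi : grade i = 1), rfl⟩ _ ⟨k, (hk : grade k = 2), rfl⟩
  rw [LinearMap.sub_apply, LinearMap.sub_apply, LinearMap.smul_apply, LinearMap.smul_apply,
    LinearMap.flip_apply, modelMul_e_e, modelMul_e_e, Submodule.mem_bot, sub_eq_zero]
  cases i <;> cases k <;> simp only [grade] at hi hk <;> try exact absurd hi (by decide)
  all_goals try exact absurd hk (by decide)
  case θ.θbar => simp only [mulTable]; rw [smul_smul, ← pow_succ', jj_pow_three, one_smul]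
  case θ.θθ => exact θCubeVec_eq_smul_rot _
  case θbarθbar.θbar a b c =>
    simp only [mulTable]
    rw [θbarCubeVec_eq_smul_rot (toLex (c, toLex (a, b))), smul_smul, ← pow_succ', jj_pow_three,
      one_smul]
    rfl
  case θbarθbar.θθ => simp [mulTable]

def genIndex : Gen N → MonomialIndex N
  | .inl a => .θ a
  | .inr a => .θbar a

def wordVec : List (Gen N) → Model N
  | [] => e .one
  | g :: w => modelMul (e (genIndex g)) (wordVec w)

lemma wordVec_mem_homogeneous (w : List (Gen N)) : wordVec w ∈ homogeneous (wGrade w) := by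
  induction w with
  | nil => exact e_mem_homogeneous rfl
  | cons g w ih =>
    have hg : grade (genIndex g) = genGrade g := by cases g <;> rfl
    rw [wGrade, List.map_cons, List.sum_cons, ← wGrade, ← hg]
    exact modelMul_mem_homogeneous (e_mem_homogeneous rfl) ih

def freeLeftMul : FreeAlgebra ℂ (Gen N) →ₐ[ℂ] Module.End ℂ (Model N) :=
  FreeAlgebra.lift ℂ fun g => modelMul (e (genIndex g))

lemma freeLeftMul_wProd (w : List (Gen N)) : freeLeftMul (wProd w) = modelMul (wordVec w) := by
  induction w with
  | nil =>
    rw [wProd, List.map_nil, List.prod_nil, map_one]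
    exact LinearMap.ext fun x => (modelMul_e_one_left x).symm
  | cons g w ih =>
    rw [wProd, List.map_cons, List.prod_cons, ← wProd, map_mul, ih, freeLeftMul,
      FreeAlgebra.lift_ι_apply]
    exact LinearMap.ext fun x => (modelMul_assoc _ _ x).symm

lemma freeLeftMul_wProd_mul_wProd (w₁ w₂ : List (Gen N)) :
    freeLeftMul (wProd w₁ * wProd w₂) = modelMul (modelMul (wordVec w₁) (wordVec w₂)) := by
  rw [map_mul, freeLeftMul_wProd, freeLeftMul_wProd]
  exact LinearMap.ext fun x => (modelMul_assoc _ _ x).symm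

lemma freeLeftMul_eq_of_rel {x y : FreeAlgebra ℂ (Gen N)} (h : Rel N x y) :
    freeLeftMul x = freeLeftMul y := by
  cases h with
  | central w₁ w₂ h =>
    rw [freeLeftMul_wProd_mul_wProd, freeLeftMul_wProd_mul_wProd,
      modelMul_comm_of_mem_homogeneous_zero (h ▸ wordVec_mem_homogeneous w₁)]
  | comm12 w₁ w₂ h₁ h₂ =>
    rw [map_smul, freeLeftMul_wProd_mul_wProd, freeLeftMul_wProd_mul_wProd,
      modelMul_eq_jj_smul_of_mem_homogeneous (h₁ ▸ wordVec_mem_homogeneous w₁)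
        (h₂ ▸ wordVec_mem_homogeneous w₂), map_smul]

def leftMul : G N →ₐ[ℂ] Module.End ℂ (Model N) :=
  RingQuot.liftAlgHom ℂ ⟨freeLeftMul, fun _ _ h => freeLeftMul_eq_of_rel h⟩

lemma leftMul_gen (g : Gen N) : leftMul (gen g) = modelMul (e (genIndex g)) := by
  rw [leftMul, gen, mk, RingQuot.liftAlgHom_mkAlgHom_apply, freeLeftMul, FreeAlgebra.lift_ι_apply]

def evalOne : G N →ₗ[ℂ] Model N := LinearMap.applyₗ (e .one) ∘ₗ leftMul.toLinearMap

lemma evalOne_monomial (i : MonomialIndex N) : evalOne (monomial i) = e i := by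
  cases i <;> simp [evalOne, monomial, θCube, θbarCube, leftMul_gen, genIndex,
    modelMul_e_one_right, modelMul_e_e, mulTable]
  case θCube c => exact orbitSum_val rot_rot_rot _ _ c
  case θbarCube c => exact orbitSum_val rot_rot_rot _ _ c

lemma linearIndependent_monomial : LinearIndependent ℂ (monomial (N := N)) :=
  LinearIndependent.of_comp evalOne <| by
    rw [show ⇑evalOne ∘ monomial = Pi.basisFun ℂ (MonomialIndex N) from funext evalOne_monomial]
    exact (Pi.basisFun ℂ (MonomialIndex N)).linearIndependent

def monomialBasis : Module.Basis (MonomialIndex N) ℂ (G N) :=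
  Module.Basis.mk linearIndependent_monomial span_monomial_eq_top.ge

end Z3

/-- the full `ℤ₃`-graded Grassmann algebra on `N` grade-1 and `N`
grade-2 generators has complex dimension `(3 + 4N + 9N² + 2N³)/3` (stated in
the division-free form `3 * dim = 3 + 4N + 9N² + 2N³`). -/
theorem finrank_Z3_grassmann (N : ℕ) :
    3 * Module.finrank ℂ (Z3.G N) = 3 + 4 * N + 9 * N ^ 2 + 2 * N ^ 3 := by
  rw [Module.finrank_eq_card_basis Z3.monomialBasis, Z3.card_monomialIndex,
    Z3.pow_three_eq_add_three_mul_card_canonTriple]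
  ring
end
end

section
/- If M, N, P are three Z3-matrices all of grade 1, then tr_{Z3}(MNP) = j · tr_{Z3}(NPM), where j = e^{2πi/3}. -/
noncomputable section

namespace Z3

/-- Index type for `3×3` block matrices with block sizes `n 0, n 1, n 2`. -/
abbrev Idx (n : Fin 3 → ℕ) := Σ r : Fin 3, Fin (n r)

/-- A `ℤ₃`-matrix: a `3×3` block matrix with Grassmann entries. -/
abbrev ZMat (N : ℕ) (n : Fin 3 → ℕ) := Matrix (Idx n) (Idx n) (G N)

/-- A `ℤ₃`-matrix is homogeneous of grade `g` when the entry in block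
position `(r,s)` has Grassmann grade `g + r - s (mod 3)` (equivalently, the
grade of the matrix is the sum mod 3 of the block-position grade `s - r` and
the Grassmann grade of the entries of that block). -/
def MGrade {N : ℕ} {n : Fin 3 → ℕ} (g : ZMod 3) (M : ZMat N n) : Prop :=
  ∀ p q : Idx n, M p q ∈ 𝒢 (g + (p.1.val : ZMod 3) - (q.1.val : ZMod 3))

/-- Weights of the three diagonal blocks appearing in the `ℤ₃`-trace and in
scalar multiplication: `(1, j^2, j)` raised to suitable powers. -/
def wt : Fin 3 → ZMod 3 := ![0, 2, 1]

/-- The `ℤ₃`-trace of a `ℤ₃`-matrix of grade `g` with diagonal blocks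
`A, E, I` is `tr A + j^{2(1-g)} tr E + j^{(1-g)} tr I`. -/
def ztrace {N : ℕ} {n : Fin 3 → ℕ} (g : ZMod 3) (M : ZMat N n) : G N :=
  ∑ p : Idx n, (jj ^ ((wt p.1 * (1 - g)).val)) • M p p

/-- The diagonal `ℤ₃`-matrix `diag(λ, j^{2∂λ} λ, j^{∂λ} λ)` implementing the
scalar multiplication by a homogeneous Grassmann element `λ` of grade `d`. -/
def lamMat (N : ℕ) (n : Fin 3 → ℕ) (lam : G N) (d : ZMod 3) : ZMat N n :=
  Matrix.diagonal fun p => (jj ^ ((wt p.1 * d).val)) • lam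

/-- Left product of a `ℤ₃`-matrix by a homogeneous Grassmann element of
grade `d`. -/
def smulL {N : ℕ} {n : Fin 3 → ℕ} (lam : G N) (d : ZMod 3) (M : ZMat N n) : ZMat N n :=
  lamMat N n lam d * M

/-- Right product of a `ℤ₃`-matrix by a homogeneous Grassmann element of
grade `d`. -/
def smulR {N : ℕ} {n : Fin 3 → ℕ} (M : ZMat N n) (lam : G N) (d : ZMod 3) : ZMat N n :=
  M * lamMat N n lam d

end Z3

namespace Z3

lemma jj_pow_three : jj ^ 3 = 1 := by
  rw [jj, ← Complex.exp_nat_mul]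
  rw [show ((3:ℕ):ℂ) * (2 * Real.pi * Complex.I / 3) = 2 * Real.pi * Complex.I by
    push_cast; ring]
  exact Complex.exp_two_pi_mul_I

lemma jj_pow_mod (m : ℕ) : jj ^ m = jj ^ (m % 3) := by
  conv_lhs => rw [← Nat.div_add_mod m 3]
  rw [pow_add, pow_mul, jj_pow_three, one_pow, one_mul]

lemma jj_pow_val_add (a b : ZMod 3) :
    jj ^ a.val * jj ^ b.val = jj ^ (a + b).val := by
  rw [← pow_add, jj_pow_mod, ZMod.val_add]

lemma wProd_append {N : ℕ} (w₁ w₂ : List (Gen N)) :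
    wProd (w₁ ++ w₂) = wProd w₁ * wProd w₂ := by
  simp [wProd]

lemma wGrade_append {N : ℕ} (w₁ w₂ : List (Gen N)) :
    wGrade (w₁ ++ w₂) = wGrade w₁ + wGrade w₂ := by
  simp [wGrade]

lemma G_mul_mem {Nn : ℕ} {a b : ZMod 3} {x y : G Nn}
    (hx : x ∈ 𝒢 a) (hy : y ∈ 𝒢 b) : x * y ∈ 𝒢 (a + b) := by
  induction hx using Submodule.span_induction with
  | mem x hx =>
    obtain ⟨w₁, hw₁, rfl⟩ := hx
    induction hy using Submodule.span_induction with
    | mem y hy =>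
      obtain ⟨w₂, hw₂, rfl⟩ := hy
      apply Submodule.subset_span
      refine ⟨w₁ ++ w₂, ?_, ?_⟩
      · rw [wGrade_append, hw₁, hw₂]
      · rw [wProd_append, map_mul]
    | zero => simp
    | add y z _ _ hy hz => rw [mul_add]; exact Submodule.add_mem _ hy hz
    | smul c y _ hy => rw [mul_smul_comm]; exact Submodule.smul_mem _ c hy
  | zero => simp
  | add x z _ _ hx hz => rw [add_mul]; exact Submodule.add_mem _ hx hz
  | smul c x _ hx => rw [smul_mul_assoc]; exact Submodule.smul_mem _ c hx

lemma G_word_comm {Nn : ℕ} {g : ZMod 3} (w₁ w₂ : List (Gen Nn))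
    (h₁ : wGrade w₁ = g) (h₂ : wGrade w₂ = -g) :
    mk Nn (wProd w₁) * mk Nn (wProd w₂)
      = jj ^ g.val • (mk Nn (wProd w₂) * mk Nn (wProd w₁)) := by
  simp only [mk]
  have hg : g = 0 ∨ g = 1 ∨ g = 2 := by
    have : ∀ g : ZMod 3, g = 0 ∨ g = 1 ∨ g = 2 := by decide
    exact this g
  rcases hg with rfl | rfl | rfl
  · rw [← map_mul, ← map_mul]
    rw [RingQuot.mkAlgHom_rel ℂ (Rel.central w₁ w₂ h₁)]
    simp
  · have h₂' : wGrade w₂ = 2 := by rw [h₂]; decide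
    rw [← map_mul, RingQuot.mkAlgHom_rel ℂ (Rel.comm12 w₁ w₂ h₁ h₂')]
    simp only [map_smul, map_mul]
    rw [show ((1 : ZMod 3).val) = 1 from rfl, pow_one]
  · have h₂' : wGrade w₂ = 1 := by rw [h₂]; decide
    have := RingQuot.mkAlgHom_rel ℂ (Rel.comm12 w₂ w₁ h₂' h₁)
    rw [map_mul, map_smul, map_mul] at this
    rw [this, smul_smul]
    rw [show ((2 : ZMod 3).val) = 2 from rfl,
      show jj ^ 2 * jj = jj ^ 3 by ring, jj_pow_three, one_smul]

lemma G_comm {Nn : ℕ} {g : ZMod 3} {x y : G Nn}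
    (hx : x ∈ 𝒢 g) (hy : y ∈ 𝒢 (-g)) :
    x * y = jj ^ g.val • (y * x) := by
  induction hx using Submodule.span_induction with
  | mem x hx =>
    obtain ⟨w₁, hw₁, rfl⟩ := hx
    induction hy using Submodule.span_induction with
    | mem y hy =>
      obtain ⟨w₂, hw₂, rfl⟩ := hy
      exact G_word_comm w₁ w₂ hw₁ hw₂
    | zero => simp
    | add y z _ _ hy hz => rw [mul_add, add_mul, smul_add, hy, hz]
    | smul c y _ hy => rw [mul_smul_comm, smul_mul_assoc, hy, smul_comm]
  | zero => simp
  | add x z _ _ hx hz => rw [add_mul, mul_add, smul_add, hx, hz]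
  | smul c x _ hx => rw [smul_mul_assoc, mul_smul_comm, hx, smul_comm]

end Z3

/-- if `M`, `N`, `P` are three `ℤ₃`-matrices all of grade 1,
then `tr_{ℤ₃}(MNP) = j · tr_{ℤ₃}(NPM)` (the products being of grade 0). -/
theorem ztrace_cyclic_grade_one (N : ℕ) (n : Fin 3 → ℕ)
    (M P Q : Z3.ZMat N n)
    (hM : Z3.MGrade 1 M) (hP : Z3.MGrade 1 P) (hQ : Z3.MGrade 1 Q) :
    Z3.ztrace 0 (M * P * Q) = jj • Z3.ztrace 0 (P * Q * M) := by
  classical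
  have harith : ∀ a b c : ZMod 3, (1 + a - c) + (1 + c - b) = -(1 + b - a) := by decide
  have hwt : ∀ a b : Fin 3,
      Z3.wt a + (1 + (a.val : ZMod 3) - (b.val : ZMod 3)) = 1 + Z3.wt b := by decide
  have key : ∀ p q : Z3.Idx n,
      M p q * (P * Q) q p
        = jj ^ ((1 + (p.1.val : ZMod 3) - (q.1.val : ZMod 3)).val)
            • ((P * Q) q p * M p q) := by
    intro p q
    refine Z3.G_comm (hM p q) ?_
    rw [Matrix.mul_apply]
    apply Submodule.sum_mem
    intro r _
    have h := Z3.G_mul_mem (hP q r) (hQ r p)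
    rwa [harith] at h
  simp only [Z3.ztrace, sub_zero, mul_one]
  rw [Finset.smul_sum]
  rw [show M * P * Q = M * (P * Q) from mul_assoc M P Q]
  calc (∑ p : Z3.Idx n, jj ^ (Z3.wt p.1).val • (M * (P * Q)) p p)
      = ∑ p : Z3.Idx n, ∑ q : Z3.Idx n,
          (jj * jj ^ (Z3.wt q.1).val) • ((P * Q) q p * M p q) := by
        refine Finset.sum_congr rfl fun p _ => ?_
        rw [Matrix.mul_apply, Finset.smul_sum]
        refine Finset.sum_congr rfl fun q _ => ?_
        rw [key p q, smul_smul, Z3.jj_pow_val_add, hwt p.1 q.1, ← Z3.jj_pow_val_add,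
          show ((1 : ZMod 3).val) = 1 from rfl, pow_one]
    _ = ∑ q : Z3.Idx n, jj • jj ^ (Z3.wt q.1).val • (P * Q * M) q q := by
        rw [Finset.sum_comm]
        refine Finset.sum_congr rfl fun q _ => ?_
        rw [Matrix.mul_apply, Finset.smul_sum, Finset.smul_sum]
        refine Finset.sum_congr rfl fun p _ => ?_
        rw [mul_smul]
end
end
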